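/- arXiv:2210.14247 — 3 statements merged into one kernel-verified Lean document; each statement's English description precedes it below -/
import Mathlib

section
/- For every function Z : ℕ×ℕ → R^d, all bounds ℓ, r ∈ ℕ², and all matrix compositions a, b over M_d, one has ⟨SS_{ℓ;r}(Z), a⟩ · ⟨SS_{ℓ;r}(Z), b⟩ = ⟨SS_{ℓ;r}(Z), a ⧢ b⟩, where ⟨SS_{ℓ;r}(Z), ·⟩ is extended R-linearly to formal R-linear combinations of matrix compositions. -/
open scoped Classical

namespace TwoParam

/-! ### The free commutative monoid on `d` generators, written additively -/

abbrev Md (d : ℕ) := Fin d →₀ ℕ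

/-! ### Raw matrices over `Md d` and matrix compositions

A raw matrix is a function `ℕ → ℕ → Md d` together with a number of rows and
columns, normalized to be `0` (= the neutral element `ε`) outside the range.
The empty composition is the `0 × 0` matrix. -/

structure RawMat (d : ℕ) where
  rows : ℕ
  cols : ℕ
  entry : ℕ → ℕ → Md d
  entry_eq_zero : ∀ i j : ℕ, rows ≤ i ∨ cols ≤ j → entry i j = 0

namespace RawMat

variable {d : ℕ}

/-- A matrix composition: no row and no column consists entirely of `ε`.
(The empty `0 × 0` matrix vacuously satisfies this.) -/
def IsComp (a : RawMat d) : Prop :=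
  (∀ i < a.rows, ∃ j < a.cols, a.entry i j ≠ 0) ∧
  (∀ j < a.cols, ∃ i < a.rows, a.entry i j ≠ 0)

/-- The empty composition. -/
def empty (d : ℕ) : RawMat d := ⟨0, 0, fun _ _ => 0, fun _ _ _ => rfl⟩

/-- Diagonal block concatenation of two matrices. -/
def diag (a b : RawMat d) : RawMat d where
  rows := a.rows + b.rows
  cols := a.cols + b.cols
  entry := fun i j =>
    if i < a.rows ∧ j < a.cols then a.entry i j
    else if a.rows ≤ i ∧ a.cols ≤ j then b.entry (i - a.rows) (j - a.cols)
    else 0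
  entry_eq_zero := by
    intro i j h
    try dsimp only
    split_ifs with h1 h2
    · exact absurd h (by omega)
    · exact b.entry_eq_zero _ _ (by omega)
    · rfl

/-- A non-empty composition is connected if it admits no nontrivial
block-diagonal decomposition into compositions. -/
def Connected (a : RawMat d) : Prop :=
  a.IsComp ∧ a ≠ empty d ∧
    ∀ b c : RawMat d, b.IsComp → c.IsComp → a = b.diag c →
      b = empty d ∨ c = empty d

/-- Total weight of a matrix: the homomorphism `Md d → ℕ` sending every
generator to `1`, summed over all entries. -/
def weight (a : RawMat d) : ℕ :=
  ∑ i ∈ Finset.range a.rows, ∑ j ∈ Finset.range a.cols,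
    (a.entry i j).sum fun _ e => e

end RawMat

/-! ### Evaluation of monomials -/

/-- For `z ∈ R^d` and `m ∈ Md d`, the evaluation `z^(m) = ∏ j, z j ^ m j`. -/
def evalMon {d : ℕ} {R : Type*} [CommRing R] (z : Fin d → R) (m : Md d) : R :=
  m.prod fun j e => z j ^ e

/-! ### Two-parameter sums signature -/

/-- Strictly increasing chains of length `m` with values in `[lo, hi)`
(0-based indexing of the data). -/
noncomputable def chainsB (m lo hi : ℕ) : Finset (Fin m → ℕ) :=
  (Fintype.piFinset fun _ : Fin m => Finset.Ico lo hi).filter StrictMono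

/-- The bounded two-parameter sums signature coefficient `⟨SS_{l;r}(Z), a⟩`. -/
noncomputable def SSb {d : ℕ} {R : Type*} [CommRing R]
    (Z : ℕ × ℕ → Fin d → R) (l r : ℕ × ℕ) (a : RawMat d) : R :=
  ∑ ι ∈ chainsB a.rows l.1 r.1, ∑ κ ∈ chainsB a.cols l.2 r.2,
    ∏ s : Fin a.rows, ∏ t : Fin a.cols, evalMon (Z (ι s, κ t)) (a.entry s t)

/-- The (unbounded) two-parameter sums signature coefficient `⟨SS(Z), a⟩`,
for finitely supported `Z` a finite sum. -/
noncomputable def SSc {d : ℕ} {R : Type*} [CommRing R]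
    (Z : ℕ × ℕ → Fin d → R) (a : RawMat d) : R :=
  ∑ᶠ ι ∈ {f : Fin a.rows → ℕ | StrictMono f},
    ∑ᶠ κ ∈ {g : Fin a.cols → ℕ | StrictMono g},
      ∏ s : Fin a.rows, ∏ t : Fin a.cols, evalMon (Z (ι s, κ t)) (a.entry s t)

/-! ### Quasi-shuffle surjections -/

/-- `qShSet m s j`: surjections `{1,…,m+s} ↠ {1,…,j}` that are strictly
increasing on the first `m` and on the last `s` arguments. -/
noncomputable def qShSet (m s j : ℕ) : Finset (Fin (m + s) → Fin j) :=
  Finset.univ.filter fun q =>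
    Function.Surjective q ∧
    (∀ u v : Fin (m + s), u < v → (v : ℕ) < m → q u < q v) ∧
    (∀ u v : Fin (m + s), u < v → m ≤ (u : ℕ) → q u < q v)

/-- The summand `c^{p,q}` of the two-parameter quasi-shuffle: the `j × k`
matrix with entries `⋆_{u ∈ p⁻¹(x), v ∈ q⁻¹(y)} diag(a,b)_{u,v}`. -/
noncomputable def qshMat {d : ℕ} (a b : RawMat d) {j k : ℕ}
    (p : Fin (a.rows + b.rows) → Fin j) (q : Fin (a.cols + b.cols) → Fin k) :
    RawMat d where
  rows := j
  cols := k
  entry := fun x y =>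
    if hx : x < j then
      if hy : y < k then
        ∑ u ∈ Finset.univ.filter (fun u => p u = ⟨x, hx⟩),
          ∑ v ∈ Finset.univ.filter (fun v => q v = ⟨y, hy⟩),
            (a.diag b).entry u v
      else 0
    else 0
  entry_eq_zero := by
    intro x y h
    try dsimp only
    split_ifs with hx hy
    · exact absurd h (by omega)
    · rfl
    · rfl

/-- The two-parameter quasi-shuffle `a ⧢ b`, as an element of the free
`R`-module on matrices.  (The empty index sets for `j` or `k` outside
`[0, rows+rows]` resp. `[0, cols+cols]` implement the conventions
`e ⧢ a = a ⧢ e = a` and `e ⧢ e = e`.) -/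
noncomputable def qsh {d : ℕ} (R : Type*) [CommRing R] (a b : RawMat d) :
    RawMat d →₀ R :=
  ∑ j ∈ Finset.range (a.rows + b.rows + 1),
    ∑ k ∈ Finset.range (a.cols + b.cols + 1),
      ∑ p ∈ qShSet a.rows b.rows j,
        ∑ q ∈ qShSet a.cols b.cols k,
          Finsupp.single (qshMat a b p q) 1

/-- Bilinear extension of the quasi-shuffle to the free module. -/
noncomputable def qshL {d : ℕ} {R : Type*} [CommRing R]
    (F G : RawMat d →₀ R) : RawMat d →₀ R :=
  F.sum fun a ra => G.sum fun b rb => (ra * rb) • qsh R a b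

/-! ### Two-parameter data: eventually zero / eventually constant functions -/

variable {V : Type*}

/-- Eventually zero two-parameter data: finite support. -/
def EvZ [Zero V] (X : ℕ × ℕ → V) : Prop := (Function.support X).Finite

/-- Eventually constant two-parameter data: there is a box outside of which
`X` is constant; i.e. whenever two values differ, one of the two indices lies
in the box. -/
def EvC (X : ℕ × ℕ → V) : Prop :=
  ∃ n : ℕ × ℕ, ∀ i j : ℕ × ℕ, X i ≠ X j →
    (i.1 ≤ n.1 ∧ i.2 ≤ n.2) ∨ (j.1 ≤ n.1 ∧ j.2 ≤ n.2)

/-- The coordinate of `i` along the axis `a` (axis `0` = rows, `1` = cols). -/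
def axC (a : Fin 2) (i : ℕ × ℕ) : ℕ := if a = 0 then i.1 else i.2

/-- Shift an index one step down along the axis `a`. -/
def shiftD (a : Fin 2) (i : ℕ × ℕ) : ℕ × ℕ :=
  if a = 0 then (i.1 - 1, i.2) else (i.1, i.2 - 1)

/-- The zero insertion operator (0-based position `k`): insert a zero
row/column at position `k` along axis `a`. -/
def zeroIns [Zero V] (a : Fin 2) (k : ℕ) (X : ℕ × ℕ → V) : ℕ × ℕ → V :=
  fun i => if axC a i < k then X i else if axC a i = k then 0 else X (shiftD a i)

/-- The warping operator (0-based position `k`): duplicate the row/column at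
position `k` along axis `a`. -/
def warp (a : Fin 2) (k : ℕ) (X : ℕ × ℕ → V) : ℕ × ℕ → V :=
  fun i => if axC a i ≤ k then X i else X (shiftD a i)

/-- The two-parameter (forward) difference operator `δ`. -/
def diffOp [AddCommGroup V] (X : ℕ × ℕ → V) : ℕ × ℕ → V := fun i =>
  X (i.1 + 1, i.2 + 1) - X (i.1 + 1, i.2) - X (i.1, i.2 + 1) + X (i.1, i.2)

/-- The summation operator `ς`, a right inverse of `δ`:
`(ς Z)_{i,j} = Σ_{s ≥ i} Σ_{t ≥ j} Z_{s,t}`. -/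
noncomputable def sigmaOp [AddCommMonoid V] (Z : ℕ × ℕ → V) : ℕ × ℕ → V :=
  fun i => ∑ᶠ p ∈ {p : ℕ × ℕ | i.1 ≤ p.1 ∧ i.2 ≤ p.2}, Z p

/-- The set of all `n ∈ ℕ²` such that `X` is determined inside the
`n.1 × n.2` upper-left box (0-based size/count convention). -/
def sizeSetC (X : ℕ × ℕ → V) : Set (ℕ × ℕ) :=
  {n | ∀ i j : ℕ × ℕ, X i ≠ X j →
    (i.1 < n.1 ∧ i.2 < n.2) ∨ (j.1 < n.1 ∧ j.2 < n.2)}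

/-- `rows(X)` for eventually constant `X`: first component of the least
element of `sizeSetC X`. -/
noncomputable def rowsC (X : ℕ × ℕ → V) : ℕ := sInf (Prod.fst '' sizeSetC X)

/-- `cols(X)` for eventually constant `X`. -/
noncomputable def colsC (X : ℕ × ℕ → V) : ℕ := sInf (Prod.snd '' sizeSetC X)

/-- `rows(Z)` for eventually zero `Z`, defined via the support. -/
noncomputable def rowsZ [Zero V] (Z : ℕ × ℕ → V) : ℕ :=
  sInf {m : ℕ | ∀ i : ℕ × ℕ, Z i ≠ 0 → i.1 < m}

/-- `cols(Z)` for eventually zero `Z`, defined via the support. -/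
noncomputable def colsZ [Zero V] (Z : ℕ × ℕ → V) : ℕ :=
  sInf {m : ℕ | ∀ i : ℕ × ℕ, Z i ≠ 0 → i.2 < m}

/-- Diagonal concatenation `A ⊘ B` on eventually zero functions,
with `rows`/`cols` taken in the eventually-constant sense. -/
noncomputable def dconc [AddCommGroup V] (A B : ℕ × ℕ → V) : ℕ × ℕ → V :=
  A + (zeroIns 0 0)^[rowsC A] ((zeroIns 1 0)^[colsC A] B)

/-- Diagonal concatenation `A ⊘ B` on eventually zero functions,
with `rows`/`cols` taken in the support sense. -/
noncomputable def dconcZ [AddCommGroup V] (A B : ℕ × ℕ → V) : ℕ × ℕ → V :=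
  A + (zeroIns 0 0)^[rowsZ A] ((zeroIns 1 0)^[colsZ A] B)

/-- Concatenation along the diagonal `X ⊠ Y` on eventually constant
functions: `ς(δX) + Warp_{1,1}^{rows X}(Warp_{2,1}^{cols X}(Y))`. -/
noncomputable def bconc [AddCommGroup V] (X Y : ℕ × ℕ → V) : ℕ × ℕ → V :=
  sigmaOp (diffOp X) + (warp 0 0)^[rowsC X] ((warp 1 0)^[colsC X] Y)


/-! ### Two-parameter quasisymmetric functions -/

/-- Monomials in the commuting variables `x_{i,j}`, `(i,j) ∈ ℕ × ℕ`. -/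
abbrev Mon := (ℕ × ℕ) →₀ ℕ

/-- Total degree of a monomial. -/
def mdeg (m : Mon) : ℕ := m.sum fun _ e => e

/-- A formal power series (given by its coefficient function) has finite
total degree. -/
def FinDeg {R : Type*} [Zero R] (f : Mon → R) : Prop :=
  ∃ D : ℕ, ∀ m : Mon, f m ≠ 0 → mdeg m ≤ D

/-- `ℕ₀`-valued raw matrices, normalized to vanish outside the range. -/
structure NMat where
  rows : ℕ
  cols : ℕ
  entry : ℕ → ℕ → ℕ
  entry_eq_zero : ∀ i j : ℕ, rows ≤ i ∨ cols ≤ j → entry i j = 0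

namespace NMat

/-- An `ℕ₀`-matrix composition: no zero row and no zero column. -/
def IsComp (a : NMat) : Prop :=
  (∀ i < a.rows, ∃ j < a.cols, a.entry i j ≠ 0) ∧
  (∀ j < a.cols, ∃ i < a.rows, a.entry i j ≠ 0)

/-- The empty composition. -/
def empty : NMat := ⟨0, 0, fun _ _ => 0, fun _ _ _ => rfl⟩

/-- Diagonal block concatenation. -/
def diag (a b : NMat) : NMat where
  rows := a.rows + b.rows
  cols := a.cols + b.cols
  entry := fun i j =>
    if i < a.rows ∧ j < a.cols then a.entry i j
    else if a.rows ≤ i ∧ a.cols ≤ j then b.entry (i - a.rows) (j - a.cols)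
    else 0
  entry_eq_zero := by
    intro i j h
    try dsimp only
    split_ifs with h1 h2
    · exact absurd h (by omega)
    · exact b.entry_eq_zero _ _ (by omega)
    · rfl

end NMat

/-- The monomial `∏_{s,t} x_{ι_s, κ_t}^{a_{s,t}}` attached to a matrix `a`
and chains `ι`, `κ`. -/
noncomputable def monomialOf (a : NMat) (ι : Fin a.rows → ℕ) (κ : Fin a.cols → ℕ) : Mon :=
  ∑ s : Fin a.rows, ∑ t : Fin a.cols, Finsupp.single (ι s, κ t) (a.entry s t)

/-- The monomial quasisymmetric function `M_a` (as a coefficient function):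
each monomial `∏ x_{ι_s,κ_t}^{a_{s,t}}` for strictly increasing chains occurs
with coefficient `1`.  In particular `M_e = 1`. -/
noncomputable def monQ {R : Type*} [CommRing R] (a : NMat) : Mon → R := fun m =>
  if ∃ (ι : Fin a.rows → ℕ) (κ : Fin a.cols → ℕ),
      StrictMono ι ∧ StrictMono κ ∧ m = monomialOf a ι κ
  then 1 else 0

/-- Two-parameter quasisymmetric function: finite degree, and for every
matrix composition `a` and all strictly increasing chains `ι`, `κ`, the
coefficients of `∏ x_{ι_s,κ_t}^{a_{s,t}}` and of `∏ x_{s,t}^{a_{s,t}}`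
coincide. -/
def IsQSym {R : Type*} [CommRing R] (f : Mon → R) : Prop :=
  FinDeg f ∧ ∀ a : NMat, a.IsComp →
    ∀ (ι : Fin a.rows → ℕ) (κ : Fin a.cols → ℕ), StrictMono ι → StrictMono κ →
      f (monomialOf a ι κ) =
        f (monomialOf a (fun s => (s : ℕ)) (fun t => (t : ℕ)))

/-- Product of formal power series (Cauchy product of coefficient
functions). -/
noncomputable def mulF {R : Type*} [CommRing R] (f g : Mon → R) : Mon → R :=
  fun m => ∑ p ∈ Finset.HasAntidiagonal.antidiagonal m, f p.1 * g p.2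

/-- Two-parameter quasisymmetric functions form an `R`-submodule of the
module of coefficient functions. -/
noncomputable def QSymSub (R : Type*) [CommRing R] : Submodule R (Mon → R) where
  carrier := {f | IsQSym f}
  add_mem' := by
    rintro f g ⟨⟨Df, hDf⟩, hf⟩ ⟨⟨Dg, hDg⟩, hg⟩
    refine ⟨⟨max Df Dg, ?_⟩, ?_⟩
    · intro m hm
      by_contra hc
      push_neg at hc
      have h1 : f m = 0 := by
        by_contra h
        have := hDf m h
        omega
      have h2 : g m = 0 := by
        by_contra h
        have := hDg m h
        omega
      apply hm
      show f m + g m = 0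
      rw [h1, h2, add_zero]
    · intro a ha ι κ hι hκ
      show f _ + g _ = f _ + g _
      rw [hf a ha ι κ hι hκ, hg a ha ι κ hι hκ]
  zero_mem' := ⟨⟨0, fun _ hm => absurd rfl hm⟩, fun _ _ _ _ _ _ => rfl⟩
  smul_mem' := by
    rintro c f ⟨⟨Df, hDf⟩, hf⟩
    refine ⟨⟨Df, ?_⟩, ?_⟩
    · intro m hm
      apply hDf
      intro h
      apply hm
      show c • f m = 0
      rw [h, smul_zero]
    · intro a ha ι κ hι hκ
      show c • f _ = c • f _
      rw [hf a ha ι κ hι hκ]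

/-- Index shift used by the free analogue of zero insertion: indices with
coordinate `≥ k` along axis `a` are shifted up by one (axis `0` = rows). -/
def liftIdx (a : Fin 2) (k : ℕ) (i : ℕ × ℕ) : ℕ × ℕ :=
  if a = 0 then (if i.1 < k then i else (i.1 + 1, i.2))
  else (if i.2 < k then i else (i.1, i.2 + 1))

/-- The free analogue of zero insertion on formal power series: the algebra
endomorphism sending `x_i ↦ x_i` for `i_a < k`, `x_i ↦ 0` for `i_a = k` and
`x_i ↦ x_{i - e_a}` for `i_a > k` (0-based position `k`).  On coefficient
functions it is given by precomposition with the index lift. -/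
noncomputable def zeroF {R : Type*} [CommRing R] (a : Fin 2) (k : ℕ)
    (f : Mon → R) : Mon → R :=
  fun m => f (m.mapDomain (liftIdx a k))

/-- The quasi-shuffle summand `c^{p,q}` for `ℕ₀`-matrices. -/
noncomputable def nQshMat (a b : NMat) {j k : ℕ}
    (p : Fin (a.rows + b.rows) → Fin j) (q : Fin (a.cols + b.cols) → Fin k) :
    NMat where
  rows := j
  cols := k
  entry := fun x y =>
    if hx : x < j then
      if hy : y < k then
        ∑ u ∈ Finset.univ.filter (fun u => p u = ⟨x, hx⟩),
          ∑ v ∈ Finset.univ.filter (fun v => q v = ⟨y, hy⟩),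
            (a.diag b).entry u v
      else 0
    else 0
  entry_eq_zero := by
    intro x y h
    try dsimp only
    split_ifs with hx hy
    · exact absurd h (by omega)
    · rfl
    · rfl

/-- One-dimensional two-parameter sums signature coefficient `⟨SS(Z), a⟩`. -/
noncomputable def SScN {K : Type*} [CommRing K] (Z : ℕ × ℕ → K) (a : NMat) : K :=
  ∑ᶠ ι ∈ {f : Fin a.rows → ℕ | StrictMono f},
    ∑ᶠ κ ∈ {g : Fin a.cols → ℕ | StrictMono g},
      ∏ s : Fin a.rows, ∏ t : Fin a.cols, Z (ι s, κ t) ^ a.entry s t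

/-- Evaluation of a formal power series at finitely supported data. -/
noncomputable def evalSeries {K : Type*} [CommRing K] (f : Mon → K)
    (Z : ℕ × ℕ → K) : K :=
  ∑ᶠ m : Mon, f m * m.prod fun i e => Z i ^ e

end TwoParam

/-!
Two strictly increasing chains `ι₁`, `ι₂` in `(ℓ₁, r₁]` determine, and are determined by, the
increasing enumeration `σ` of their joint range together with the quasi-shuffle surjection `p`
recording where each entry of `(ι₁, ι₂)` sits in it; likewise `(κ₁, κ₂)` ↔ `(q, τ)`. The product
of the summands of `a` at `(ι₁, κ₁)` and of `b` at `(ι₂, κ₂)` is the summand of `diag(a, b)` at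
`(σ ∘ p, τ ∘ q)`, and collecting the entries over the fibres of `p` and `q` turns it into the
summand of `c^{p,q}` at `(σ, τ)`.
-/

namespace TwoParam

open Finset

section Factorization

variable {α : Type*} [LinearOrder α] {n : ℕ}

noncomputable def rangeEmb (w : Fin n → α) : Fin (univ.image w).card ↪o α :=
  (univ.image w).orderEmbOfFin rfl

noncomputable def rangeIdx (w : Fin n → α) (u : Fin n) : Fin (univ.image w).card :=
  ((univ.image w).orderIsoOfFin rfl).symm ⟨w u, mem_image_of_mem w (mem_univ u)⟩

lemma rangeEmb_rangeIdx (w : Fin n → α) (u : Fin n) : rangeEmb w (rangeIdx w u) = w u := by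
  rw [rangeEmb, rangeIdx, ← coe_orderIsoOfFin_apply, OrderIso.apply_symm_apply]

lemma rangeEmb_comp_rangeIdx (w : Fin n → α) : rangeEmb w ∘ rangeIdx w = w :=
  funext (rangeEmb_rangeIdx w)

lemma rangeIdx_lt_rangeIdx_iff (w : Fin n → α) (u v : Fin n) :
    rangeIdx w u < rangeIdx w v ↔ w u < w v := by
  rw [← (rangeEmb w).lt_iff_lt, rangeEmb_rangeIdx, rangeEmb_rangeIdx]

lemma rangeEmb_mem_range (w : Fin n → α) (x : Fin (univ.image w).card) :
    rangeEmb w x ∈ Set.range w := by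
  obtain ⟨u, -, hu⟩ := mem_image.1 (orderEmbOfFin_mem (univ.image w) rfl x)
  exact ⟨u, hu⟩

lemma rangeIdx_surjective (w : Fin n → α) : Function.Surjective (rangeIdx w) := fun x => by
  obtain ⟨u, hu⟩ := rangeEmb_mem_range w x
  exact ⟨u, (rangeEmb w).injective (by rw [rangeEmb_rangeIdx, hu])⟩

lemma sigma_eq_of_strictMono_comp_surjective {j j' : ℕ} {p : Fin n → Fin j}
    {p' : Fin n → Fin j'} {σ : Fin j → α} {σ' : Fin j' → α} (hσ : StrictMono σ)
    (hσ' : StrictMono σ') (hp : Function.Surjective p) (hp' : Function.Surjective p')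
    (h : σ ∘ p = σ' ∘ p') :
    (⟨j, p, σ⟩ : Σ j, (Fin n → Fin j) × (Fin j → α)) = ⟨j', p', σ'⟩ := by
  have hrange : Set.range σ = Set.range σ' := by
    rw [← hp.range_comp, ← hp'.range_comp, h]
  obtain rfl : j = j' := by
    simpa [Set.ncard_range_of_injective hσ.injective,
      Set.ncard_range_of_injective hσ'.injective] using congrArg Set.ncard hrange
  obtain rfl : σ = σ' := (hσ.range_inj hσ').1 hrange
  obtain rfl : p = p' := funext fun u => hσ.injective (congrFun h u)
  rfl

end Factorization

section Merge

variable {m s : ℕ}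

lemma mem_chainsB {k lo hi : ℕ} {f : Fin k → ℕ} :
    f ∈ chainsB k lo hi ↔ (∀ x, f x ∈ Ico lo hi) ∧ StrictMono f := by
  simp [chainsB, Fintype.mem_piFinset]

lemma mem_qShSet {j : ℕ} {q : Fin (m + s) → Fin j} :
    q ∈ qShSet m s j ↔ Function.Surjective q ∧
      (∀ u v : Fin (m + s), u < v → (v : ℕ) < m → q u < q v) ∧
      (∀ u v : Fin (m + s), u < v → m ≤ (u : ℕ) → q u < q v) := by
  simp [qShSet]

lemma append_of_lt {β : Type*} (f : Fin m → β) (g : Fin s → β) (u : Fin (m + s))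
    (h : (u : ℕ) < m) : Fin.append f g u = f ⟨u, h⟩ :=
  Fin.append_left f g ⟨u, h⟩

lemma append_of_le {β : Type*} (f : Fin m → β) (g : Fin s → β) (u : Fin (m + s))
    (h : m ≤ (u : ℕ)) : Fin.append f g u = g ⟨u - m, by omega⟩ := by
  obtain ⟨i, rfl⟩ : ∃ i, u = Fin.natAdd m i := ⟨⟨u - m, by omega⟩, Fin.ext (by simp; omega)⟩
  simp

lemma rangeIdx_append_mem_qShSet {f : Fin m → ℕ} {g : Fin s → ℕ} (hf : StrictMono f)
    (hg : StrictMono g) :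
    rangeIdx (Fin.append f g) ∈ qShSet m s (univ.image (Fin.append f g)).card := by
  refine mem_qShSet.2 ⟨rangeIdx_surjective _, fun u v huv hv => ?_, fun u v huv hu => ?_⟩
  · rw [rangeIdx_lt_rangeIdx_iff, append_of_lt f g u ((Fin.lt_def.1 huv).trans hv),
      append_of_lt f g v hv]
    exact hf huv
  · rw [rangeIdx_lt_rangeIdx_iff, append_of_le f g u hu,
      append_of_le f g v (hu.trans (Fin.lt_def.1 huv).le)]
    exact hg (Fin.mk_lt_mk.2 (by omega))

lemma rangeEmb_mem_chainsB {w : Fin n → ℕ} {lo hi : ℕ} (hw : ∀ u, w u ∈ Ico lo hi) :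
    ⇑(rangeEmb w) ∈ chainsB _ lo hi := by
  refine mem_chainsB.2 ⟨fun x => ?_, (rangeEmb w).strictMono⟩
  obtain ⟨u, hu⟩ := rangeEmb_mem_range w x
  exact hu ▸ hw u

lemma comp_castAdd_mem_chainsB {j lo hi : ℕ} {p : Fin (m + s) → Fin j} {σ : Fin j → ℕ}
    (hp : p ∈ qShSet m s j) (hσ : σ ∈ chainsB j lo hi) :
    σ ∘ p ∘ Fin.castAdd s ∈ chainsB m lo hi := by
  obtain ⟨hσI, hσM⟩ := mem_chainsB.1 hσ
  refine mem_chainsB.2 ⟨fun _ => hσI _, fun u v huv => hσM ?_⟩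
  exact (mem_qShSet.1 hp).2.1 _ _ (Fin.strictMono_castAdd s huv) v.isLt

lemma comp_natAdd_mem_chainsB {j lo hi : ℕ} {p : Fin (m + s) → Fin j} {σ : Fin j → ℕ}
    (hp : p ∈ qShSet m s j) (hσ : σ ∈ chainsB j lo hi) :
    σ ∘ p ∘ Fin.natAdd m ∈ chainsB s lo hi := by
  obtain ⟨hσI, hσM⟩ := mem_chainsB.1 hσ
  refine mem_chainsB.2 ⟨fun _ => hσI _, fun u v huv => hσM ?_⟩
  exact (mem_qShSet.1 hp).2.2 _ _ ((Fin.natAdd_lt_natAdd_iff m).2 huv) (by simp)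

lemma sum_chainsB_append_eq_sum_qShSet {M : Type*} [AddCommMonoid M] (lo hi : ℕ)
    (F : (Fin (m + s) → ℕ) → M) :
    ∑ f ∈ chainsB m lo hi, ∑ g ∈ chainsB s lo hi, F (Fin.append f g) =
      ∑ j ∈ range (m + s + 1), ∑ p ∈ qShSet m s j, ∑ σ ∈ chainsB j lo hi, F (σ ∘ p) := by
  simp only [← sum_product']
  rw [sum_sigma' _ _ fun j (y : (Fin (m + s) → Fin j) × (Fin j → ℕ)) => F (y.2 ∘ y.1)]
  refine sum_nbij'
    (fun x => ⟨_, rangeIdx (Fin.append x.1 x.2), rangeEmb (Fin.append x.1 x.2)⟩)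
    (fun y => (y.2.2 ∘ y.2.1 ∘ Fin.castAdd s, y.2.2 ∘ y.2.1 ∘ Fin.natAdd m))
    ?_ ?_ ?_ ?_ ?_
  · rintro ⟨f, g⟩ hfg
    obtain ⟨⟨hfI, hfM⟩, ⟨hgI, hgM⟩⟩ := (mem_product.1 hfg).imp mem_chainsB.1 mem_chainsB.1
    refine mem_sigma.2 ⟨mem_range.2 (Nat.lt_succ_of_le ?_), mem_product.2
      ⟨rangeIdx_append_mem_qShSet hfM hgM, rangeEmb_mem_chainsB fun u => ?_⟩⟩
    · simpa using card_image_le (s := univ) (f := Fin.append f g)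
    · induction u using Fin.addCases <;> simp [hfI, hgI]
  · rintro ⟨j, p, σ⟩ hy
    obtain ⟨-, hp, hσ⟩ := mem_sigma.1 hy |>.imp_right mem_product.1
    exact mem_product.2 ⟨comp_castAdd_mem_chainsB hp hσ, comp_natAdd_mem_chainsB hp hσ⟩
  · rintro ⟨f, g⟩ -
    ext u <;> simp [rangeEmb_rangeIdx]
  · rintro ⟨j, p, σ⟩ hy
    obtain ⟨-, hp, hσ⟩ := mem_sigma.1 hy |>.imp_right mem_product.1
    refine sigma_eq_of_strictMono_comp_surjective (rangeEmb _).strictMono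
      (mem_chainsB.1 hσ).2 (rangeIdx_surjective _) (mem_qShSet.1 hp).1 ?_
    rw [rangeEmb_comp_rangeIdx]
    exact Fin.append_castAdd_natAdd (f := σ ∘ p)
  · rintro ⟨f, g⟩ -
    rw [rangeEmb_comp_rangeIdx]

end Merge

namespace RawMat

variable {d : ℕ} (a b : RawMat d)

lemma diag_entry_castAdd_castAdd (u : Fin a.rows) (v : Fin a.cols) :
    (a.diag b).entry (Fin.castAdd b.rows u) (Fin.castAdd b.cols v) = a.entry u v := by
  simp [diag]

lemma diag_entry_castAdd_natAdd (u : Fin a.rows) (v : Fin b.cols) :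
    (a.diag b).entry (Fin.castAdd b.rows u) (Fin.natAdd a.cols v) = 0 := by
  simp [diag]

lemma diag_entry_natAdd_castAdd (u : Fin b.rows) (v : Fin a.cols) :
    (a.diag b).entry (Fin.natAdd a.rows u) (Fin.castAdd b.cols v) = 0 := by
  simp [diag]

lemma diag_entry_natAdd_natAdd (u : Fin b.rows) (v : Fin b.cols) :
    (a.diag b).entry (Fin.natAdd a.rows u) (Fin.natAdd a.cols v) = b.entry u v := by
  simp [diag]

end RawMat

section Evaluation

variable {d : ℕ} {R : Type*} [CommRing R]

lemma evalMon_zero (z : Fin d → R) : evalMon z 0 = 1 := Finsupp.prod_zero_index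

lemma evalMon_sum {ι : Type*} (z : Fin d → R) (t : Finset ι) (F : ι → Md d) :
    evalMon z (∑ i ∈ t, F i) = ∏ i ∈ t, evalMon z (F i) :=
  (Finsupp.prod_finsetSum_index (fun _ => pow_zero _) fun _ _ _ => pow_add _ _ _).symm

def evalMat (Z : ℕ × ℕ → Fin d → R) (a : RawMat d) (ι : Fin a.rows → ℕ)
    (κ : Fin a.cols → ℕ) : R :=
  ∏ s : Fin a.rows, ∏ t : Fin a.cols, evalMon (Z (ι s, κ t)) (a.entry s t)

lemma SSb_eq_sum_evalMat (Z : ℕ × ℕ → Fin d → R) (l r : ℕ × ℕ) (a : RawMat d) :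
    SSb Z l r a =
      ∑ ι ∈ chainsB a.rows l.1 r.1, ∑ κ ∈ chainsB a.cols l.2 r.2, evalMat Z a ι κ :=
  rfl

lemma evalMat_diag (Z : ℕ × ℕ → Fin d → R) (a b : RawMat d) (ι₁ : Fin a.rows → ℕ)
    (ι₂ : Fin b.rows → ℕ) (κ₁ : Fin a.cols → ℕ) (κ₂ : Fin b.cols → ℕ) :
    evalMat Z (a.diag b) (Fin.append ι₁ ι₂) (Fin.append κ₁ κ₂) =
      evalMat Z a ι₁ κ₁ * evalMat Z b ι₂ κ₂ := by
  change ∏ u : Fin (a.rows + b.rows), ∏ v : Fin (a.cols + b.cols),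
    evalMon (Z (Fin.append ι₁ ι₂ u, Fin.append κ₁ κ₂ v)) ((a.diag b).entry u v) = _
  simp only [Fin.prod_univ_add, Fin.append_left, Fin.append_right,
    RawMat.diag_entry_castAdd_castAdd, RawMat.diag_entry_castAdd_natAdd,
    RawMat.diag_entry_natAdd_castAdd, RawMat.diag_entry_natAdd_natAdd, evalMon_zero,
    prod_const_one, mul_one, one_mul, evalMat]

lemma qshMat_entry (a b : RawMat d) {j k : ℕ} (p : Fin (a.rows + b.rows) → Fin j)
    (q : Fin (a.cols + b.cols) → Fin k) (x : Fin j) (y : Fin k) :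
    (qshMat a b p q).entry x y =
      ∑ u ∈ univ.filter (p · = x), ∑ v ∈ univ.filter (q · = y), (a.diag b).entry u v := by
  simp [qshMat]

lemma evalMat_qshMat (Z : ℕ × ℕ → Fin d → R) (a b : RawMat d) {j k : ℕ}
    (p : Fin (a.rows + b.rows) → Fin j) (q : Fin (a.cols + b.cols) → Fin k)
    (σ : Fin j → ℕ) (τ : Fin k → ℕ) :
    evalMat Z (qshMat a b p q) σ τ = evalMat Z (a.diag b) (σ ∘ p) (τ ∘ q) := by
  calc evalMat Z (qshMat a b p q) σ τ
      = ∏ x : Fin j, ∏ y : Fin k, ∏ u ∈ univ.filter (p · = x), ∏ v ∈ univ.filter (q · = y),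
          evalMon (Z (σ (p u), τ (q v))) ((a.diag b).entry u v) := by
        refine prod_congr rfl fun x _ => prod_congr rfl fun y _ => ?_
        rw [qshMat_entry a b p q x y, evalMon_sum]
        refine prod_congr rfl fun u hu => ?_
        rw [evalMon_sum]
        refine prod_congr rfl fun v hv => ?_
        simp only [mem_filter, mem_univ, true_and] at hu hv
        rw [hu, hv]
    _ = ∏ x : Fin j, ∏ u ∈ univ.filter (p · = x), ∏ y : Fin k, ∏ v ∈ univ.filter (q · = y),
          evalMon (Z (σ (p u), τ (q v))) ((a.diag b).entry u v) :=
        prod_congr rfl fun _ _ => prod_comm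
    _ = evalMat Z (a.diag b) (σ ∘ p) (τ ∘ q) := by
        simp only [prod_fiberwise]
        rfl

end Evaluation

end TwoParam

open TwoParam in
theorem statement1_general {d : ℕ} {R : Type*} [CommRing R]
    (Z : ℕ × ℕ → Fin d → R) (l r : ℕ × ℕ) (a b : RawMat d) :
    SSb Z l r a * SSb Z l r b =
      ∑ j ∈ Finset.range (a.rows + b.rows + 1),
        ∑ k ∈ Finset.range (a.cols + b.cols + 1),
          ∑ p ∈ qShSet a.rows b.rows j,
            ∑ q ∈ qShSet a.cols b.cols k,
              SSb Z l r (qshMat a b p q) := by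
  open Finset in
  calc SSb Z l r a * SSb Z l r b
      = ∑ ι₁ ∈ chainsB a.rows l.1 r.1, ∑ ι₂ ∈ chainsB b.rows l.1 r.1,
          ∑ κ₁ ∈ chainsB a.cols l.2 r.2, ∑ κ₂ ∈ chainsB b.cols l.2 r.2,
            evalMat Z (a.diag b) (Fin.append ι₁ ι₂) (Fin.append κ₁ κ₂) := by
        simp only [SSb_eq_sum_evalMat, evalMat_diag, sum_mul_sum]
    _ = ∑ j ∈ range (a.rows + b.rows + 1), ∑ p ∈ qShSet a.rows b.rows j,
          ∑ σ ∈ chainsB j l.1 r.1, ∑ k ∈ range (a.cols + b.cols + 1),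
            ∑ q ∈ qShSet a.cols b.cols k, ∑ τ ∈ chainsB k l.2 r.2,
              evalMat Z (qshMat a b p q) σ τ := by
        simp only [evalMat_qshMat]
        rw [sum_chainsB_append_eq_sum_qShSet l.1 r.1 fun ι =>
          ∑ κ₁ ∈ chainsB a.cols l.2 r.2, ∑ κ₂ ∈ chainsB b.cols l.2 r.2,
            evalMat Z (a.diag b) ι (Fin.append κ₁ κ₂)]
        exact sum_congr rfl fun _ _ => sum_congr rfl fun p _ => sum_congr rfl fun σ _ =>
          sum_chainsB_append_eq_sum_qShSet l.2 r.2 (evalMat Z (a.diag b) (σ ∘ p))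
    _ = ∑ j ∈ range (a.rows + b.rows + 1), ∑ p ∈ qShSet a.rows b.rows j,
          ∑ k ∈ range (a.cols + b.cols + 1), ∑ q ∈ qShSet a.cols b.cols k,
            ∑ σ ∈ chainsB j l.1 r.1, ∑ τ ∈ chainsB k l.2 r.2,
              evalMat Z (qshMat a b p q) σ τ :=
        sum_congr rfl fun _ _ => sum_congr rfl fun _ _ =>
          sum_comm.trans (sum_congr rfl fun _ _ => sum_comm)
    _ = _ := sum_congr rfl fun _ _ => sum_comm

open TwoParam in
/-- the quasi-shuffle identity for the two-parameter sums
signature. -/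
theorem statement1 {d : ℕ} {R : Type*} [CommRing R] [IsDomain R]
    (Z : ℕ × ℕ → Fin d → R) (l r : ℕ × ℕ) (a b : RawMat d)
    (ha : a.IsComp) (hb : b.IsComp) :
    SSb Z l r a * SSb Z l r b =
      ∑ j ∈ Finset.range (a.rows + b.rows + 1),
        ∑ k ∈ Finset.range (a.cols + b.cols + 1),
          ∑ p ∈ qShSet a.rows b.rows j,
            ∑ q ∈ qShSet a.cols b.cols k,
              SSb Z l r (qshMat a b p q) :=
  statement1_general Z l r a b
end

section
/- The two-parameter quasi-shuffle product ⧢, extended bilinearly to the free R-module R⟨C⟩ with basis the matrix compositions, is commutative and associative, with the empty composition e as multiplicative unit. -/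
open scoped Classical

/-!
Through `Fin.append`, a surjection `q ∈ qSh(m, s; j)` is a pair `(f, g)` of strictly increasing
maps into `Fin j` whose ranges cover `Fin j`, and `c^{p,q}` is the matrix obtained by pushing the
entries of `a` along `(f, f')` and those of `b` along `(g, g')` and adding them (`merge`).
Commutativity swaps the two pairs, and the only pair for `m = 0` is `(∅, id)`, which gives the unit.

For associativity, both `(a ⧢ b) ⧢ c` and `a ⧢ (b ⧢ c)` are sums over covering triples
`(F, G, H)` of strictly increasing maps. A nested datum `(f, g)` into `Fin i`, `(φ, h)` into `Fin j`
gives `(φ ∘ f, φ ∘ g, h)`; conversely `(F, G)` factors uniquely as `φ ∘ (f, g)` with `φ` the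
increasing enumeration of `range F ∪ range G`. Since pushing entries forward is functorial, both
nested merges are the same triple merge. Bilinearity reduces everything to basis vectors.
-/

namespace TwoParam

open Finset Function

section QuasiShuffleMaps

variable {α : Type*} {m s t i i' j : ℕ}

lemma range_comp_union_range_comp {f : Fin m → Fin i} {g : Fin s → Fin i}
    (hfg : Set.range f ∪ Set.range g = Set.univ) (φ : Fin i → α) :
    Set.range (φ ∘ f) ∪ Set.range (φ ∘ g) = Set.range φ := by
  rw [Set.range_comp, Set.range_comp, ← Set.image_union, hfg, Set.image_univ]

lemma range_append (f : Fin m → α) (g : Fin s → α) :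
    Set.range (Fin.append f g) = Set.range f ∪ Set.range g := by
  ext x
  constructor
  · rintro ⟨u, rfl⟩
    induction u using Fin.addCases <;> simp
  · rintro (⟨u, rfl⟩ | ⟨u, rfl⟩)
    exacts [⟨Fin.castAdd s u, by simp⟩, ⟨Fin.natAdd m u, by simp⟩]

noncomputable def qShPairs (m s j : ℕ) : Finset ((Fin m → Fin j) × (Fin s → Fin j)) :=
  univ.filter fun p => StrictMono p.1 ∧ StrictMono p.2 ∧ Set.range p.1 ∪ Set.range p.2 = Set.univ

noncomputable def qShTriples (m s t j : ℕ) :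
    Finset ((Fin m → Fin j) × (Fin s → Fin j) × (Fin t → Fin j)) :=
  univ.filter fun p => StrictMono p.1 ∧ StrictMono p.2.1 ∧ StrictMono p.2.2 ∧
    Set.range p.1 ∪ Set.range p.2.1 ∪ Set.range p.2.2 = Set.univ

lemma mem_qShPairs {p : (Fin m → Fin j) × (Fin s → Fin j)} :
    p ∈ qShPairs m s j ↔
      StrictMono p.1 ∧ StrictMono p.2 ∧ Set.range p.1 ∪ Set.range p.2 = Set.univ := by
  simp [qShPairs]

lemma mem_qShTriples {p : (Fin m → Fin j) × (Fin s → Fin j) × (Fin t → Fin j)} :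
    p ∈ qShTriples m s t j ↔ StrictMono p.1 ∧ StrictMono p.2.1 ∧ StrictMono p.2.2 ∧
      Set.range p.1 ∪ Set.range p.2.1 ∪ Set.range p.2.2 = Set.univ := by
  simp [qShTriples]

lemma le_add_of_range_union_eq_univ {f : Fin m → Fin j} {g : Fin s → Fin j}
    (hfg : Set.range f ∪ Set.range g = Set.univ) : j ≤ m + s := by
  have hsurj : Surjective (Fin.append f g) := by
    rw [← Set.range_eq_univ, range_append, hfg]
  simpa using Fintype.card_le_of_surjective _ hsurj

lemma sum_qShSet {N : Type*} [AddCommMonoid N] (T : (Fin (m + s) → Fin j) → N) :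
    ∑ q ∈ qShSet m s j, T q = ∑ p ∈ qShPairs m s j, T (Fin.append p.1 p.2) := by
  refine sum_nbij' (fun q => (q ∘ Fin.castAdd s, q ∘ Fin.natAdd m))
    (fun p => Fin.append p.1 p.2) ?_ ?_ (fun q _ => Fin.append_castAdd_natAdd)
    (fun p _ => by ext <;> simp) (fun q _ => congrArg T Fin.append_castAdd_natAdd.symm)
  · intro q hq
    simp only [qShSet, mem_filter, mem_univ, true_and] at hq
    obtain ⟨hsurj, h₁, h₂⟩ := hq
    refine mem_qShPairs.2 ⟨fun u v huv => h₁ _ _ huv (by simp), fun u v huv => h₂ _ _ (by simpa)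
      (by simp), ?_⟩
    change Set.range (fun u => q (Fin.castAdd s u)) ∪ Set.range (fun u => q (Fin.natAdd m u)) = _
    rw [← range_append, Fin.append_castAdd_natAdd, Set.range_eq_univ.2 hsurj]
  · intro p hp
    obtain ⟨hf, hg, hfg⟩ := mem_qShPairs.1 hp
    simp only [qShSet, mem_filter, mem_univ, true_and]
    refine ⟨Set.range_eq_univ.1 (by rw [range_append, hfg]), fun u v huv hv => ?_,
      fun u v huv hu => ?_⟩
    · induction u using Fin.addCases <;> induction v using Fin.addCases <;>
        simp only [Fin.lt_def, Fin.val_castAdd, Fin.val_natAdd, Fin.append_left,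
          Fin.append_right] at * <;>
        first | omega | exact hf huv
    · induction u using Fin.addCases <;> induction v using Fin.addCases <;>
        simp only [Fin.lt_def, Fin.val_castAdd, Fin.val_natAdd, Fin.append_left,
          Fin.append_right] at * <;>
        first | omega | exact hg (by simpa using huv)

lemma exists_qShPairs_comp {F : Fin m → Fin j} {G : Fin s → Fin j} (hF : StrictMono F)
    (hG : StrictMono G) :
    ∃ i, ∃ p ∈ qShPairs m s i, ∃ φ : Fin i → Fin j, StrictMono φ ∧ φ ∘ p.1 = F ∧ φ ∘ p.2 = G := by
  let φ := (Set.range F ∪ Set.range G).toFinset.orderEmbOfFin rfl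
  have hφ : Set.range φ = Set.range F ∪ Set.range G := by
    simp [φ, Finset.range_orderEmbOfFin]
  obtain ⟨f, hf⟩ := Set.range_subset_range_iff_exists_comp.1
    (Set.subset_union_left.trans hφ.ge)
  obtain ⟨g, hg⟩ := Set.range_subset_range_iff_exists_comp.1
    (Set.subset_union_right.trans hφ.ge)
  refine ⟨_, (f, g), mem_qShPairs.2 ⟨?_, ?_, ?_⟩, φ, φ.strictMono, hf.symm, hg.symm⟩
  · exact fun u v huv => φ.strictMono.lt_iff_lt.1 (by simpa only [hf, comp_apply] using hF huv)
  · exact fun u v huv => φ.strictMono.lt_iff_lt.1 (by simpa only [hg, comp_apply] using hG huv)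
  · refine Set.image_injective.2 φ.injective ?_
    rw [Set.image_union, ← Set.range_comp, ← Set.range_comp, ← hf, ← hg, Set.image_univ, hφ]

lemma eq_of_comp_eq_of_mem_qShPairs {p : (Fin m → Fin i) × (Fin s → Fin i)}
    {p' : (Fin m → Fin i') × (Fin s → Fin i')} (hp : p ∈ qShPairs m s i)
    (hp' : p' ∈ qShPairs m s i') {φ : Fin i → Fin j} {φ' : Fin i' → Fin j}
    (hφ : StrictMono φ) (hφ' : StrictMono φ') (h₁ : φ ∘ p.1 = φ' ∘ p'.1)
    (h₂ : φ ∘ p.2 = φ' ∘ p'.2) : i = i' ∧ HEq p p' ∧ HEq φ φ' := by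
  have hrange : Set.range φ = Set.range φ' := by
    rw [← range_comp_union_range_comp (mem_qShPairs.1 hp).2.2,
      ← range_comp_union_range_comp (mem_qShPairs.1 hp').2.2, h₁, h₂]
  obtain rfl : i = i' := by
    have := congrArg (fun S : Set (Fin j) => Nat.card S) hrange
    simpa only [Nat.card_range_of_injective hφ.injective,
      Nat.card_range_of_injective hφ'.injective, Nat.card_eq_fintype_card, Fintype.card_fin]
      using this
  obtain rfl := (hφ.range_inj hφ').1 hrange
  exact ⟨rfl, heq_of_eq (Prod.ext (hφ.injective.comp_left h₁) (hφ.injective.comp_left h₂)),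
    HEq.rfl⟩

noncomputable def qShData (m s : ℕ) : Finset (Σ j, (Fin m → Fin j) × (Fin s → Fin j)) :=
  (range (m + s + 1)).sigma (qShPairs m s)

noncomputable def qShData₃ (m s t : ℕ) :
    Finset (Σ j, (Fin m → Fin j) × (Fin s → Fin j) × (Fin t → Fin j)) :=
  (range (m + s + t + 1)).sigma (qShTriples m s t)

lemma mem_qShData {P : Σ j, (Fin m → Fin j) × (Fin s → Fin j)} :
    P ∈ qShData m s ↔ P.2 ∈ qShPairs m s P.1 := by
  rw [qShData, mem_sigma, mem_range, and_iff_right_iff_imp]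
  exact fun hP => Nat.lt_succ_of_le (le_add_of_range_union_eq_univ (mem_qShPairs.1 hP).2.2)

lemma mem_qShData₃ {T : Σ j, (Fin m → Fin j) × (Fin s → Fin j) × (Fin t → Fin j)} :
    T ∈ qShData₃ m s t ↔ T.2 ∈ qShTriples m s t T.1 := by
  rw [qShData₃, mem_sigma, mem_range, and_iff_right_iff_imp]
  intro hT
  refine Nat.lt_succ_of_le (le_add_of_range_union_eq_univ
    (f := Fin.append T.2.1 T.2.2.1) (g := T.2.2.2) ?_)
  rw [range_append]
  exact (mem_qShTriples.1 hT).2.2.2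

variable {N : Type*} [AddCommMonoid N]

lemma sum_qShData_qShData_left
    (M : (j : ℕ) → (Fin m → Fin j) → (Fin s → Fin j) → (Fin t → Fin j) → N) :
    ∑ P ∈ qShData m s, ∑ Q ∈ qShData P.1 t, M Q.1 (Q.2.1 ∘ P.2.1) (Q.2.1 ∘ P.2.2) Q.2.2 =
      ∑ T ∈ qShData₃ m s t, M T.1 T.2.1 T.2.2.1 T.2.2.2 := by
  rw [sum_sigma']
  refine sum_bij (fun x _ => ⟨x.2.1, x.2.2.1 ∘ x.1.2.1, x.2.2.1 ∘ x.1.2.2, x.2.2.2⟩) ?_ ?_ ?_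
    (fun _ _ => rfl)
  · rintro ⟨⟨i, f, g⟩, ⟨j, φ, h⟩⟩ hx
    simp only [mem_sigma, mem_qShData, mem_qShPairs] at hx
    obtain ⟨⟨hf, hg, hfg⟩, hφ, hh, hφh⟩ := hx
    refine mem_qShData₃.2 (mem_qShTriples.2 ⟨hφ.comp hf, hφ.comp hg, hh, ?_⟩)
    rw [range_comp_union_range_comp hfg, hφh]
  · rintro ⟨⟨i, f, g⟩, ⟨j, φ, h⟩⟩ hx ⟨⟨i', f', g'⟩, ⟨j', φ', h'⟩⟩ hx' heq
    simp only [mem_sigma, mem_qShData] at hx hx'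
    obtain ⟨rfl, heq⟩ := Sigma.mk.inj_iff.1 heq
    simp only [heq_eq_eq, Prod.mk.injEq] at heq
    obtain ⟨h₁, h₂, rfl⟩ := heq
    obtain ⟨rfl, hp, hφ⟩ := eq_of_comp_eq_of_mem_qShPairs hx.1 hx'.1 (mem_qShPairs.1 hx.2).1
      (mem_qShPairs.1 hx'.2).1 h₁ h₂
    cases hp
    cases hφ
    rfl
  · rintro ⟨j, F, G, H⟩ hT
    simp only [mem_qShData₃, mem_qShTriples] at hT
    obtain ⟨hF, hG, hH, hFGH⟩ := hT
    obtain ⟨i, p, hp, φ, hφ, rfl, rfl⟩ := exists_qShPairs_comp hF hG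
    refine ⟨⟨⟨i, p⟩, ⟨j, φ, H⟩⟩, ?_, rfl⟩
    simp only [mem_sigma, mem_qShData]
    refine ⟨hp, mem_qShPairs.2 ⟨hφ, hH, ?_⟩⟩
    rwa [← range_comp_union_range_comp (mem_qShPairs.1 hp).2.2]

lemma sum_qShData_qShData_right
    (M : (j : ℕ) → (Fin m → Fin j) → (Fin s → Fin j) → (Fin t → Fin j) → N) :
    ∑ P ∈ qShData s t, ∑ Q ∈ qShData m P.1, M Q.1 Q.2.1 (Q.2.2 ∘ P.2.1) (Q.2.2 ∘ P.2.2) =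
      ∑ T ∈ qShData₃ m s t, M T.1 T.2.1 T.2.2.1 T.2.2.2 := by
  rw [sum_sigma']
  refine sum_bij (fun x _ => ⟨x.2.1, x.2.2.1, x.2.2.2 ∘ x.1.2.1, x.2.2.2 ∘ x.1.2.2⟩) ?_ ?_ ?_
    (fun _ _ => rfl)
  · rintro ⟨⟨i, g, h⟩, ⟨j, f, ψ⟩⟩ hx
    simp only [mem_sigma, mem_qShData, mem_qShPairs] at hx
    obtain ⟨⟨hg, hh, hgh⟩, hf, hψ, hfψ⟩ := hx
    refine mem_qShData₃.2 (mem_qShTriples.2 ⟨hf, hψ.comp hg, hψ.comp hh, ?_⟩)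
    rw [Set.union_assoc, range_comp_union_range_comp hgh, hfψ]
  · rintro ⟨⟨i, g, h⟩, ⟨j, f, ψ⟩⟩ hx ⟨⟨i', g', h'⟩, ⟨j', f', ψ'⟩⟩ hx' heq
    simp only [mem_sigma, mem_qShData] at hx hx'
    obtain ⟨rfl, heq⟩ := Sigma.mk.inj_iff.1 heq
    simp only [heq_eq_eq, Prod.mk.injEq] at heq
    obtain ⟨rfl, h₁, h₂⟩ := heq
    obtain ⟨rfl, hp, hψ⟩ := eq_of_comp_eq_of_mem_qShPairs hx.1 hx'.1 (mem_qShPairs.1 hx.2).2.1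
      (mem_qShPairs.1 hx'.2).2.1 h₁ h₂
    cases hp
    cases hψ
    rfl
  · rintro ⟨j, F, G, H⟩ hT
    simp only [mem_qShData₃, mem_qShTriples] at hT
    obtain ⟨hF, hG, hH, hFGH⟩ := hT
    obtain ⟨i, p, hp, ψ, hψ, rfl, rfl⟩ := exists_qShPairs_comp hG hH
    refine ⟨⟨⟨i, p⟩, ⟨j, F, ψ⟩⟩, ?_, rfl⟩
    simp only [mem_sigma, mem_qShData]
    refine ⟨hp, mem_qShPairs.2 ⟨hF, hψ, ?_⟩⟩
    rwa [← range_comp_union_range_comp (mem_qShPairs.1 hp).2.2, ← Set.union_assoc]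

lemma sum_qShData_comm (T : (j : ℕ) → (Fin m → Fin j) → (Fin s → Fin j) → N) :
    ∑ P ∈ qShData m s, T P.1 P.2.1 P.2.2 = ∑ P ∈ qShData s m, T P.1 P.2.2 P.2.1 := by
  refine sum_nbij' (fun P => ⟨P.1, P.2.swap⟩) (fun P => ⟨P.1, P.2.swap⟩) ?_ ?_
    (fun _ _ => rfl) (fun _ _ => rfl) (fun _ _ => rfl)
  all_goals
    intro P hP
    obtain ⟨h₁, h₂, h⟩ := mem_qShPairs.1 (mem_qShData.1 hP)
    exact mem_qShData.2 (mem_qShPairs.2 ⟨h₂, h₁, by rw [Set.union_comm]; exact h⟩)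

lemma qShData_zero_left (s : ℕ) : qShData 0 s = {⟨s, Fin.elim0, id⟩} := by
  ext ⟨j, f, g⟩
  rw [mem_qShData, mem_qShPairs, mem_singleton]
  constructor
  · rintro ⟨-, hg, hfg⟩
    rw [Set.range_eq_empty f, Set.empty_union, Set.range_eq_univ] at hfg
    obtain rfl : j = s := by
      simpa using (Fintype.card_of_bijective ⟨hg.injective, hfg⟩).symm
    obtain rfl : g = id := (hg.range_inj strictMono_id).1 (by simp [hfg.range_eq])
    congr
    exact funext fun u => u.elim0
  · rintro ⟨⟩
    exact ⟨fun u => u.elim0, strictMono_id, by simp⟩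

lemma sum_qShData_zero_left (T : (j : ℕ) → (Fin 0 → Fin j) → (Fin s → Fin j) → N) :
    ∑ P ∈ qShData 0 s, T P.1 P.2.1 P.2.2 = T s Fin.elim0 id := by
  rw [qShData_zero_left, sum_singleton]

end QuasiShuffleMaps

section Merge

variable {d : ℕ}

namespace RawMat

lemma ext_of_entry {a b : RawMat d} (hr : a.rows = b.rows) (hc : a.cols = b.cols)
    (he : a.entry = b.entry) : a = b := by
  cases a; cases b
  subst hr hc he
  rfl

-- Reducible, so that `(ofFn e).rows` and `j` match when rewriting under dependent types.
@[reducible]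
def ofFn {j k : ℕ} (e : Fin j → Fin k → Md d) : RawMat d where
  rows := j
  cols := k
  entry x y := if hx : x < j then if hy : y < k then e ⟨x, hx⟩ ⟨y, hy⟩ else 0 else 0
  entry_eq_zero x y h := by
    split_ifs with hx hy
    · omega
    · rfl
    · rfl

def toFn (a : RawMat d) : Fin a.rows → Fin a.cols → Md d := fun u v => a.entry u v

@[simp]
lemma toFn_ofFn {j k : ℕ} (e : Fin j → Fin k → Md d) : (ofFn e).toFn = e := by
  ext u v : 2
  have hu : (u : ℕ) < j := u.isLt
  have hv : (v : ℕ) < k := v.isLt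
  simp only [toFn, dif_pos hu, dif_pos hv]

lemma ofFn_toFn (a : RawMat d) : ofFn a.toFn = a := by
  refine ext_of_entry rfl rfl (funext₂ fun x y => ?_)
  simp only [toFn]
  split_ifs with hx hy
  · rfl
  · exact (a.entry_eq_zero x y (Or.inr (not_lt.1 hy))).symm
  · exact (a.entry_eq_zero x y (Or.inl (not_lt.1 hx))).symm

end RawMat

lemma sum_fiber_sum_fiber_eq_sum_fiber_comp {M α β γ : Type*} [AddCommMonoid M] [Fintype α]
    [Fintype β] [DecidableEq β] [DecidableEq γ] (f : α → β) (φ : β → γ) (x : γ) (F : α → M) :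
    ∑ w ∈ univ.filter (fun w => φ w = x), ∑ u ∈ univ.filter (fun u => f u = w), F u =
      ∑ u ∈ univ.filter (fun u => φ (f u) = x), F u := by
  rw [sum_fiberwise_eq_sum_filter]
  simp

section PushEntries

variable {M : Type*} [AddCommMonoid M] {m n i i' j k : ℕ}

def pushEntries (e : Fin m → Fin n → M) (f : Fin m → Fin j) (f' : Fin n → Fin k) :
    Fin j → Fin k → M :=
  fun x y => ∑ u ∈ univ.filter (fun u => f u = x), ∑ v ∈ univ.filter (fun v => f' v = y), e u v

lemma pushEntries_add (e₁ e₂ : Fin m → Fin n → M) (f : Fin m → Fin j) (f' : Fin n → Fin k) :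
    pushEntries (e₁ + e₂) f f' = pushEntries e₁ f f' + pushEntries e₂ f f' := by
  ext x y : 2
  simp [pushEntries, sum_add_distrib]

lemma pushEntries_pushEntries (e : Fin m → Fin n → M) (f : Fin m → Fin i)
    (f' : Fin n → Fin i') (φ : Fin i → Fin j) (φ' : Fin i' → Fin k) :
    pushEntries (pushEntries e f f') φ φ' = pushEntries e (φ ∘ f) (φ' ∘ f') := by
  ext x y : 2
  simp only [pushEntries, comp_apply]
  rw [← sum_fiber_sum_fiber_eq_sum_fiber_comp f φ]
  refine sum_congr rfl fun w _ => ?_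
  rw [sum_comm]
  exact sum_congr rfl fun u _ => sum_fiber_sum_fiber_eq_sum_fiber_comp f' φ' y (e u)

lemma pushEntries_id (e : Fin m → Fin n → M) : pushEntries e id id = e := by
  ext x y : 2
  simp [pushEntries, filter_eq']

lemma pushEntries_of_rows_eq_zero (hm : m = 0) (e : Fin m → Fin n → M) (f : Fin m → Fin j)
    (f' : Fin n → Fin k) : pushEntries e f f' = 0 := by
  subst hm
  ext x y : 2
  simp [pushEntries]

end PushEntries

lemma pushEntries_diag (a b : RawMat d) {j k : ℕ} (f : Fin a.rows → Fin j)
    (g : Fin b.rows → Fin j) (f' : Fin a.cols → Fin k) (g' : Fin b.cols → Fin k) :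
    pushEntries (fun (u : Fin (a.rows + b.rows)) (v : Fin (a.cols + b.cols)) =>
      (a.diag b).entry u v) (Fin.append f g) (Fin.append f' g') =
      pushEntries a.toFn f f' + pushEntries b.toFn g g' := by
  ext x y : 2
  have hr (u : Fin a.rows) : ¬ a.rows ≤ u := not_le.2 u.isLt
  have hc (v : Fin a.cols) : ¬ a.cols ≤ v := not_le.2 v.isLt
  simp [pushEntries, sum_filter, Fin.sum_univ_add, RawMat.diag, RawMat.toFn, hr, hc]

noncomputable def merge (a b : RawMat d) {j k : ℕ} (f : Fin a.rows → Fin j)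
    (g : Fin b.rows → Fin j) (f' : Fin a.cols → Fin k) (g' : Fin b.cols → Fin k) : RawMat d :=
  RawMat.ofFn (pushEntries a.toFn f f' + pushEntries b.toFn g g')

lemma merge_rows (a b : RawMat d) {j k : ℕ} (f : Fin a.rows → Fin j) (g : Fin b.rows → Fin j)
    (f' : Fin a.cols → Fin k) (g' : Fin b.cols → Fin k) : (merge a b f g f' g').rows = j :=
  rfl

lemma merge_cols (a b : RawMat d) {j k : ℕ} (f : Fin a.rows → Fin j) (g : Fin b.rows → Fin j)
    (f' : Fin a.cols → Fin k) (g' : Fin b.cols → Fin k) : (merge a b f g f' g').cols = k :=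
  rfl

noncomputable def merge₃ (a b c : RawMat d) {j k : ℕ} (F : Fin a.rows → Fin j)
    (G : Fin b.rows → Fin j) (H : Fin c.rows → Fin j) (F' : Fin a.cols → Fin k)
    (G' : Fin b.cols → Fin k) (H' : Fin c.cols → Fin k) : RawMat d :=
  RawMat.ofFn (pushEntries a.toFn F F' + pushEntries b.toFn G G' + pushEntries c.toFn H H')

lemma qshMat_append (a b : RawMat d) {j k : ℕ} (f : Fin a.rows → Fin j)
    (g : Fin b.rows → Fin j) (f' : Fin a.cols → Fin k) (g' : Fin b.cols → Fin k) :
    qshMat a b (Fin.append f g) (Fin.append f' g') = merge a b f g f' g' := by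
  rw [merge, ← pushEntries_diag]
  rfl

lemma merge_comm (a b : RawMat d) {j k : ℕ} (f : Fin a.rows → Fin j)
    (g : Fin b.rows → Fin j) (f' : Fin a.cols → Fin k) (g' : Fin b.cols → Fin k) :
    merge b a g f g' f' = merge a b f g f' g' := by
  simp only [merge, add_comm]

lemma empty_merge (a : RawMat d) (f : Fin (RawMat.empty d).rows → Fin a.rows)
    (f' : Fin (RawMat.empty d).cols → Fin a.cols) : merge (RawMat.empty d) a f id f' id = a := by
  rw [merge, pushEntries_of_rows_eq_zero (rfl : (RawMat.empty d).rows = 0), zero_add,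
    pushEntries_id, RawMat.ofFn_toFn]

lemma merge_merge_left (a b c : RawMat d) {i i' j k : ℕ} (f : Fin a.rows → Fin i)
    (g : Fin b.rows → Fin i) (f' : Fin a.cols → Fin i') (g' : Fin b.cols → Fin i')
    (φ : Fin i → Fin j) (h : Fin c.rows → Fin j) (φ' : Fin i' → Fin k) (h' : Fin c.cols → Fin k) :
    merge (merge a b f g f' g') c φ h φ' h' =
      merge₃ a b c (φ ∘ f) (φ ∘ g) h (φ' ∘ f') (φ' ∘ g') h' := by
  unfold merge merge₃
  rw [RawMat.toFn_ofFn, pushEntries_add, pushEntries_pushEntries, pushEntries_pushEntries]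

lemma merge_merge_right (a b c : RawMat d) {i i' j k : ℕ} (g : Fin b.rows → Fin i)
    (h : Fin c.rows → Fin i) (g' : Fin b.cols → Fin i') (h' : Fin c.cols → Fin i')
    (f : Fin a.rows → Fin j) (ψ : Fin i → Fin j) (f' : Fin a.cols → Fin k)
    (ψ' : Fin i' → Fin k) :
    merge a (merge b c g h g' h') f ψ f' ψ' =
      merge₃ a b c f (ψ ∘ g) (ψ ∘ h) f' (ψ' ∘ g') (ψ' ∘ h') := by
  unfold merge merge₃
  rw [RawMat.toFn_ofFn, pushEntries_add, pushEntries_pushEntries, pushEntries_pushEntries,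
    add_assoc]

end Merge

section QuasiShuffle

variable {d : ℕ} {R : Type*} [CommRing R]

lemma qsh_eq_sum_merge (a b : RawMat d) :
    qsh R a b = ∑ P ∈ qShData a.rows b.rows, ∑ Q ∈ qShData a.cols b.cols,
      Finsupp.single (merge a b P.2.1 P.2.2 Q.2.1 Q.2.2) 1 := by
  simp only [qsh, sum_qShSet, qshMat_append, qShData, sum_sigma]
  exact sum_congr rfl fun j _ => sum_comm

lemma qsh_comm (a b : RawMat d) : qsh R a b = qsh R b a := by
  rw [qsh_eq_sum_merge, qsh_eq_sum_merge]
  refine (sum_qShData_comm (fun j f g => ∑ Q ∈ qShData a.cols b.cols,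
    Finsupp.single (merge a b f g Q.2.1 Q.2.2) (1 : R))).trans (sum_congr rfl fun P _ => ?_)
  refine (sum_qShData_comm (fun k f' g' =>
    Finsupp.single (merge a b P.2.2 P.2.1 f' g') (1 : R))).trans (sum_congr rfl fun Q _ => ?_)
  rw [merge_comm]

lemma empty_qsh (a : RawMat d) : qsh R (RawMat.empty d) a = Finsupp.single a 1 := by
  rw [qsh_eq_sum_merge]
  refine (sum_qShData_zero_left (fun j f g => ∑ Q ∈ qShData 0 a.cols,
    Finsupp.single (merge (RawMat.empty d) a f g Q.2.1 Q.2.2) (1 : R))).trans ?_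
  refine (sum_qShData_zero_left (fun k f' g' =>
    Finsupp.single (merge (RawMat.empty d) a Fin.elim0 id f' g') (1 : R))).trans ?_
  exact congrArg (Finsupp.single · 1) (empty_merge a _ _)

noncomputable def qshBilin (R : Type*) [CommRing R] (d : ℕ) :
    (RawMat d →₀ R) →ₗ[R] (RawMat d →₀ R) →ₗ[R] RawMat d →₀ R :=
  Finsupp.linearCombination R fun a => Finsupp.linearCombination R (qsh R a)

lemma qshL_eq_qshBilin (F G : RawMat d →₀ R) : qshL F G = qshBilin R d F G := by
  simp [qshL, qshBilin, Finsupp.linearCombination_apply, Finsupp.sum, Finset.smul_sum,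
    mul_smul]

@[simp]
lemma qshBilin_single_single (a b : RawMat d) :
    qshBilin R d (Finsupp.single a 1) (Finsupp.single b 1) = qsh R a b := by
  simp [qshBilin]

lemma qshBilin_qsh_single (a b c : RawMat d) :
    qshBilin R d (qsh R a b) (Finsupp.single c 1) =
      ∑ T ∈ qShData₃ a.rows b.rows c.rows, ∑ T' ∈ qShData₃ a.cols b.cols c.cols,
        Finsupp.single (merge₃ a b c T.2.1 T.2.2.1 T.2.2.2 T'.2.1 T'.2.2.1 T'.2.2.2) 1 := by
  simp only [qsh_eq_sum_merge a b, map_sum, LinearMap.sum_apply,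
    qshBilin_single_single, qsh_eq_sum_merge _ c]
  dsimp only [merge_rows, merge_cols]
  simp only [merge_merge_left]
  rw [← sum_qShData_qShData_left (fun j F G H => ∑ T' ∈ qShData₃ a.cols b.cols c.cols,
    Finsupp.single (merge₃ a b c F G H T'.2.1 T'.2.2.1 T'.2.2.2) (1 : R))]
  refine sum_congr rfl fun P _ => sum_comm.trans (sum_congr rfl fun Q _ => ?_)
  exact sum_qShData_qShData_left (fun k F' G' H' => Finsupp.single
    (merge₃ a b c (Q.2.1 ∘ P.2.1) (Q.2.1 ∘ P.2.2) Q.2.2 F' G' H') (1 : R))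

lemma qshBilin_single_qsh (a b c : RawMat d) :
    qshBilin R d (Finsupp.single a 1) (qsh R b c) =
      ∑ T ∈ qShData₃ a.rows b.rows c.rows, ∑ T' ∈ qShData₃ a.cols b.cols c.cols,
        Finsupp.single (merge₃ a b c T.2.1 T.2.2.1 T.2.2.2 T'.2.1 T'.2.2.1 T'.2.2.2) 1 := by
  simp only [qsh_eq_sum_merge b c, map_sum, qshBilin_single_single, qsh_eq_sum_merge a]
  dsimp only [merge_rows, merge_cols]
  simp only [merge_merge_right]
  rw [← sum_qShData_qShData_right (fun j F G H => ∑ T' ∈ qShData₃ a.cols b.cols c.cols,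
    Finsupp.single (merge₃ a b c F G H T'.2.1 T'.2.2.1 T'.2.2.2) (1 : R))]
  refine sum_congr rfl fun P _ => sum_comm.trans (sum_congr rfl fun Q _ => ?_)
  exact sum_qShData_qShData_right (fun k F' G' H' => Finsupp.single
    (merge₃ a b c Q.2.1 (Q.2.2 ∘ P.2.1) (Q.2.2 ∘ P.2.2) F' G' H') (1 : R))

lemma qshBilin_assoc (F G H : RawMat d →₀ R) :
    qshBilin R d (qshBilin R d F G) H = qshBilin R d F (qshBilin R d G H) := by
  suffices (qshBilin R d).compr₂ (qshBilin R d) =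
      (LinearMap.llcomp R _ _ _ ∘ₗ qshBilin R d).compl₂ (qshBilin R d) from
    congr($this F G H)
  ext a b c : 6
  simp [qshBilin_qsh_single, qshBilin_single_qsh]

lemma qshBilin_comm (F G : RawMat d →₀ R) : qshBilin R d F G = qshBilin R d G F := by
  suffices (qshBilin R d).flip = qshBilin R d from LinearMap.congr_fun₂ this G F
  ext a b : 4
  simp [qsh_comm]

lemma qshBilin_empty_left (F : RawMat d →₀ R) :
    qshBilin R d (Finsupp.single (RawMat.empty d) 1) F = F := by
  suffices qshBilin R d (Finsupp.single (RawMat.empty d) 1) = LinearMap.id from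
    LinearMap.congr_fun this F
  ext a : 2
  simp [empty_qsh]

lemma qshBilin_empty_right (F : RawMat d →₀ R) :
    qshBilin R d F (Finsupp.single (RawMat.empty d) 1) = F := by
  rw [qshBilin_comm, qshBilin_empty_left]

end QuasiShuffle

end TwoParam

open TwoParam in
theorem statement2_general {d : ℕ} {R : Type*} [CommRing R]
    (F G H : RawMat d →₀ R) :
    qshL F G = qshL G F ∧
    qshL (qshL F G) H = qshL F (qshL G H) ∧
    qshL (Finsupp.single (RawMat.empty d) (1 : R)) F = F ∧
    qshL F (Finsupp.single (RawMat.empty d) (1 : R)) = F := by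
  simp only [qshL_eq_qshBilin]
  exact ⟨qshBilin_comm F G, qshBilin_assoc F G H, qshBilin_empty_left F, qshBilin_empty_right F⟩

open TwoParam in
/-- the two-parameter quasi-shuffle, extended bilinearly to the
free module on matrix compositions, is commutative, associative, and has the
empty composition as unit. -/
theorem statement2 {d : ℕ} {R : Type*} [CommRing R] [IsDomain R]
    (F G H : RawMat d →₀ R)
    (hF : ∀ x ∈ F.support, x.IsComp) (hG : ∀ x ∈ G.support, x.IsComp)
    (hH : ∀ x ∈ H.support, x.IsComp) :
    qshL F G = qshL G F ∧
    qshL (qshL F G) H = qshL F (qshL G H) ∧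
    qshL (Finsupp.single (RawMat.empty d) (1 : R)) F = F ∧
    qshL F (Finsupp.single (RawMat.empty d) (1 : R)) = F :=
  statement2_general F G H
end

section
/- For all axes a ∈ {1,2} and all k, j ∈ ℕ: (i) the warping operator Warp_{a,k} : evC → evC is an injective R-module endomorphism; (ii) Warp_{1,k} ∘ Warp_{2,j} = Warp_{2,j} ∘ Warp_{1,k}; (iii) if k > j then Warp_{a,k} ∘ Warp_{a,j} = Warp_{a,j} ∘ Warp_{a,k−1}. -/
open scoped Classical

/-
Each warping operator is precomposition with a surjective map of `ℕ × ℕ` that moves every index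
back by at most one step along one axis. Linearity and injectivity follow at once, eventual
constancy survives because the box grows by at most one, and both commutation relations are
identities between these index maps, which act on the two coordinates separately.
-/

namespace TwoParam

def warpNat (k n : ℕ) : ℕ := if n ≤ k then n else n - 1

theorem warpNat_surjective (k : ℕ) : Function.Surjective (warpNat k) := fun n =>
  ⟨if n ≤ k then n else n + 1, by unfold warpNat; split_ifs <;> omega⟩

theorem le_warpNat_add_one (k n : ℕ) : n ≤ warpNat k n + 1 := by
  unfold warpNat; split_ifs <;> omega

theorem warpNat_comp_warpNat_of_lt {j k : ℕ} (h : j < k) :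
    warpNat j ∘ warpNat k = warpNat (k - 1) ∘ warpNat j := by
  funext n; simp only [Function.comp_apply, warpNat]; split_ifs <;> omega

def warpIdx (a : Fin 2) (k : ℕ) (i : ℕ × ℕ) : ℕ × ℕ :=
  if axC a i ≤ k then i else shiftD a i

theorem warp_eq_comp_warpIdx {V : Type*} (a : Fin 2) (k : ℕ) (X : ℕ × ℕ → V) :
    warp a k X = X ∘ warpIdx a k := by
  funext i; exact (apply_ite X _ _ _).symm

theorem warpIdx_zero (k : ℕ) : warpIdx 0 k = Prod.map (warpNat k) id := by
  funext ⟨m, n⟩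
  simp only [warpIdx, axC, shiftD, warpNat, if_true, Prod.map_apply, id]
  split_ifs <;> rfl

theorem warpIdx_one (k : ℕ) : warpIdx 1 k = Prod.map id (warpNat k) := by
  funext ⟨m, n⟩
  simp only [warpIdx, axC, shiftD, warpNat, one_ne_zero, if_false, Prod.map_apply, id]
  split_ifs <;> rfl

theorem warpIdx_surjective : ∀ (a : Fin 2) (k : ℕ), Function.Surjective (warpIdx a k)
  | 0, k => warpIdx_zero k ▸ (warpNat_surjective k).prodMap Function.surjective_id
  | 1, k => warpIdx_one k ▸ Function.surjective_id.prodMap (warpNat_surjective k)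

theorem le_warpIdx_add_one : ∀ (a : Fin 2) (k : ℕ) (i : ℕ × ℕ), i ≤ warpIdx a k i + (1, 1)
  | 0, k, i => by rw [warpIdx_zero]; exact ⟨le_warpNat_add_one k i.1, Nat.le_succ i.2⟩
  | 1, k, i => by rw [warpIdx_one]; exact ⟨Nat.le_succ i.1, le_warpNat_add_one k i.2⟩

theorem warpIdx_one_comp_warpIdx_zero (k j : ℕ) :
    warpIdx 1 j ∘ warpIdx 0 k = warpIdx 0 k ∘ warpIdx 1 j := by
  simp only [warpIdx_zero, warpIdx_one, Prod.map_comp_map, Function.id_comp, Function.comp_id]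

theorem warpIdx_comp_warpIdx_of_lt {j k : ℕ} (h : j < k) :
    ∀ a : Fin 2, warpIdx a j ∘ warpIdx a k = warpIdx a (k - 1) ∘ warpIdx a j
  | 0 => by
    simp only [warpIdx_zero, Prod.map_comp_map, Function.comp_id, warpNat_comp_warpNat_of_lt h]
  | 1 => by
    simp only [warpIdx_one, Prod.map_comp_map, Function.comp_id, warpNat_comp_warpNat_of_lt h]

theorem EvC.comp {V : Type*} {X : ℕ × ℕ → V} (hX : EvC X) {f : ℕ × ℕ → ℕ × ℕ} (c : ℕ × ℕ)
    (hf : ∀ i, i ≤ f i + c) : EvC (X ∘ f) := by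
  obtain ⟨n, hn⟩ := hX
  refine ⟨n + c, fun i j hij => ?_⟩
  simp only [← Prod.le_def] at hn ⊢
  exact (hn (f i) (f j) hij).imp (fun h => (hf i).trans (by gcongr))
    (fun h => (hf j).trans (by gcongr))

end TwoParam

open TwoParam in
theorem statement7_general {d : ℕ} {R : Type*} [CommRing R] :
    (∀ (a : Fin 2) (k : ℕ),
      (∀ X : ℕ × ℕ → Fin d → R, EvC X → EvC (warp a k X)) ∧
      (∀ X Y : ℕ × ℕ → Fin d → R, EvC X → EvC Y →
        warp a k (X + Y) = warp a k X + warp a k Y) ∧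
      (∀ (c : R) (X : ℕ × ℕ → Fin d → R), EvC X →
        warp a k (c • X) = c • warp a k X) ∧
      (∀ X Y : ℕ × ℕ → Fin d → R, EvC X → EvC Y →
        warp a k X = warp a k Y → X = Y)) ∧
    (∀ (k j : ℕ) (X : ℕ × ℕ → Fin d → R), EvC X →
      warp 0 k (warp 1 j X) = warp 1 j (warp 0 k X)) ∧
    (∀ (a : Fin 2) (k j : ℕ), j < k →
      ∀ X : ℕ × ℕ → Fin d → R, EvC X →
        warp a k (warp a j X) = warp a j (warp a (k - 1) X)) := by
  simp only [warp_eq_comp_warpIdx, Function.comp_assoc]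
  refine ⟨fun a k => ⟨fun X hX => hX.comp (1, 1) (le_warpIdx_add_one a k), fun _ _ _ _ => rfl,
    fun _ _ _ => rfl, fun X Y _ _ h => (warpIdx_surjective a k).injective_comp_right h⟩,
    fun k j X _ => by rw [warpIdx_one_comp_warpIdx_zero],
    fun a k j h X _ => by rw [warpIdx_comp_warpIdx_of_lt h a]⟩

open TwoParam in
/-- warping operators are injective module endomorphisms of
`evC` and satisfy the stated commutation relations. -/
theorem statement7 {d : ℕ} {R : Type*} [CommRing R] [IsDomain R] :
    (∀ (a : Fin 2) (k : ℕ),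
      (∀ X : ℕ × ℕ → Fin d → R, EvC X → EvC (warp a k X)) ∧
      (∀ X Y : ℕ × ℕ → Fin d → R, EvC X → EvC Y →
        warp a k (X + Y) = warp a k X + warp a k Y) ∧
      (∀ (c : R) (X : ℕ × ℕ → Fin d → R), EvC X →
        warp a k (c • X) = c • warp a k X) ∧
      (∀ X Y : ℕ × ℕ → Fin d → R, EvC X → EvC Y →
        warp a k X = warp a k Y → X = Y)) ∧
    (∀ (k j : ℕ) (X : ℕ × ℕ → Fin d → R), EvC X →
      warp 0 k (warp 1 j X) = warp 1 j (warp 0 k X)) ∧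
    (∀ (a : Fin 2) (k j : ℕ), j < k →
      ∀ X : ℕ × ℕ → Fin d → R, EvC X →
        warp a k (warp a j X) = warp a j (warp a (k - 1) X)) :=
  statement7_general
end
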